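/- Let χ be a non-principal Dirichlet character modulo N with χ(-1) = 1. Then h_N(z; τ, χ) = ∫_ℝ Φ_N(x; χ) e^{πiτx² - 2πzx} dx is an odd function of z, i.e., h_N(-z; τ, χ) = -h_N(z; τ, χ). -/
import Mathlib


open Finset Complex

noncomputable def PhiChi (N : ℕ) (χ : DirichletCharacter ℂ N) (t : ℂ) : ℂ :=
  (∑ k ∈ Finset.Ico 1 N, χ (k : ZMod N) * Complex.exp (2 * Real.pi * k * t / Real.sqrt N)) /
    (1 - Complex.exp (2 * Real.pi * t * Real.sqrt N))

noncomputable def hN (N : ℕ) (χ : DirichletCharacter ℂ N) (τ z : ℂ) : ℂ :=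
  ∫ x : ℝ, PhiChi N χ x *
    Complex.exp (Real.pi * Complex.I * τ * x ^ 2 - 2 * Real.pi * z * x)

lemma PhiChi_neg (N : ℕ) (χ : DirichletCharacter ℂ N) (heven : χ (-1) = 1) (t : ℂ) :
    PhiChi N χ (-t) = -PhiChi N χ t := by
  unfold PhiChi
  set a : ℂ := 2 * Real.pi * t * Real.sqrt N with ha
  have hexp : Complex.exp (2 * (Real.pi : ℂ) * (-t) * Real.sqrt N) = (Complex.exp a)⁻¹ := by
    rw [← Complex.exp_neg]
    congr 1
    ring
  by_cases hE : Complex.exp a = 1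
  · rw [hexp, hE]
    simp
  · have hN0 : N ≠ 0 := by
      rintro rfl
      apply hE
      simp [ha]
    have hsq : (0 : ℝ) < Real.sqrt N := Real.sqrt_pos.2 (by positivity)
    have hsne : (Real.sqrt N : ℂ) ≠ 0 := by
      exact_mod_cast hsq.ne'
    have hNs : (Real.sqrt N : ℂ) * Real.sqrt N = (N : ℂ) := by
      rw [← Complex.ofReal_mul, Real.mul_self_sqrt (by positivity)]
      norm_cast
    have hEne : Complex.exp a ≠ 0 := Complex.exp_ne_zero a
    have h1 : (1 : ℂ) - Complex.exp a ≠ 0 := by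
      intro h
      exact hE (by linear_combination -h)
    have h2 : (1 : ℂ) - (Complex.exp a)⁻¹ ≠ 0 := by
      intro h
      apply hE
      have : (Complex.exp a)⁻¹ = 1 := by linear_combination -h
      rw [← inv_inv (Complex.exp a), this]; simp
    -- reindex the numerator
    have hsum : (∑ k ∈ Finset.Ico 1 N, χ (k : ZMod N) *
        Complex.exp (2 * Real.pi * k * (-t) / Real.sqrt N)) =
        (Complex.exp a)⁻¹ * ∑ k ∈ Finset.Ico 1 N, χ (k : ZMod N) *
        Complex.exp (2 * Real.pi * k * t / Real.sqrt N) := by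
      rw [Finset.mul_sum]
      refine Finset.sum_nbij' (fun k => N - k) (fun k => N - k) ?_ ?_ ?_ ?_ ?_
      · intro k hk
        simp only [Finset.mem_Ico] at hk ⊢
        omega
      · intro k hk
        simp only [Finset.mem_Ico] at hk ⊢
        omega
      · intro k hk
        simp only [Finset.mem_Ico] at hk
        omega
      · intro k hk
        simp only [Finset.mem_Ico] at hk
        omega
      · intro k hk
        simp only [Finset.mem_Ico] at hk
        have hkN : k ≤ N := hk.2.le
        have hc1 : ((N - k : ℕ) : ZMod N) = -(k : ZMod N) := by
          push_cast [Nat.cast_sub hkN]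
          simp
        have hc2 : ((N - k : ℕ) : ℂ) = (N : ℂ) - k := by
          push_cast [Nat.cast_sub hkN]
          ring
        have hχ : χ (((N - k : ℕ) : ZMod N)) = χ (k : ZMod N) := by
          rw [hc1, show -(k : ZMod N) = -1 * k by ring, map_mul, heven, one_mul]
        have hNdiv : (N : ℂ) / Real.sqrt N = Real.sqrt N := by
          rw [div_eq_iff hsne]
          exact hNs.symm
        have hexp2 : Complex.exp (2 * Real.pi * k * (-t) / Real.sqrt N) =
            (Complex.exp a)⁻¹ * Complex.exp (2 * Real.pi * ((N : ℂ) - k) * t / Real.sqrt N) := by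
          rw [← Complex.exp_neg, ← Complex.exp_add]
          congr 1
          rw [ha]
          linear_combination (-(2 * (Real.pi : ℂ) * t)) * hNdiv
        rw [hχ, hc2, hexp2]
        ring
    rw [hexp, hsum]
    generalize (∑ k ∈ Finset.Ico 1 N, χ (k : ZMod N) *
      Complex.exp (2 * Real.pi * k * t / Real.sqrt N)) = S
    rw [← neg_div, div_eq_div_iff h2 h1]
    linear_combination (-S) * inv_mul_cancel₀ hEne

theorem hN_odd (N : ℕ) (χ : DirichletCharacter ℂ N) (hχ : χ ≠ 1) (heven : χ (-1) = 1)
    (τ : ℂ) (hτ : 0 < τ.im) (z : ℂ) :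
    hN N χ τ (-z) = -hN N χ τ z := by
  unfold hN
  have hf : ∀ x : ℝ, PhiChi N χ x *
      Complex.exp (Real.pi * Complex.I * τ * (x : ℂ) ^ 2 - 2 * Real.pi * (-z) * x) =
      -(PhiChi N χ ((-x : ℝ) : ℂ) *
        Complex.exp (Real.pi * Complex.I * τ * (((-x : ℝ) : ℂ)) ^ 2 - 2 * Real.pi * z * ((-x : ℝ) : ℂ))) := by
    intro x
    have h1 : PhiChi N χ ((-x : ℝ) : ℂ) = -PhiChi N χ x := by
      push_cast
      exact PhiChi_neg N χ heven x
    rw [h1]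
    push_cast
    rw [show Real.pi * Complex.I * τ * (-(x : ℂ)) ^ 2 - 2 * Real.pi * z * (-(x : ℂ)) =
        Real.pi * Complex.I * τ * (x : ℂ) ^ 2 - 2 * Real.pi * (-z) * x by ring]
    ring
  simp_rw [hf]
  rw [MeasureTheory.integral_neg]
  congr 1
  exact MeasureTheory.integral_neg_eq_self
    (fun x : ℝ => PhiChi N χ x *
      Complex.exp (Real.pi * Complex.I * τ * (x : ℂ) ^ 2 - 2 * Real.pi * z * x)) _
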